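/- arXiv:1507.06970 — 4 statements merged into one kernel-verified Lean document; each statement's English description precedes it below -/
import Mathlib

section
/- Under the Hogwild! noise model, the mismatch error satisfies E‖x̂_j - x_j‖² ≤ γ²M²(2τ + 8τ²·Δ̄_C/n), where x̂_j - x_j = γ·∑_{i=j-τ, i≠j}^{j+τ} S_i^j g(x̂_i, s_i), each S_i^j is a diagonal sign matrix, ‖g(·,·)‖ ≤ M, and any two independent uniformly sampled hyperedges intersect with probability at most 2Δ̄_C/n. -/
/-!
Expand `‖∑ i, u i‖²` into `∑ i, ∑ j, ⟪u i, u j⟫`. The `k ≤ 2τ` diagonal terms are at most `M²`.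
The vector `u i` lives on the hyperedge `s i`, so an off-diagonal term vanishes unless `s i` and
`s j` meet, and is at most `M²` otherwise. In expectation each of the at most `k² ≤ 4τ²`
off-diagonal pairs therefore contributes at most `M² · 2Δ̄_C / n`.
-/

open Finset MeasureTheory
open scoped InnerProductSpace RealInnerProductSpace

namespace EuclideanSpace

variable {𝕜 ι : Type*} [RCLike 𝕜] [Fintype ι]

theorem norm_toLp_mul_le {c : ι → 𝕜} (hc : ∀ i, ‖c i‖ ≤ 1) (x : EuclideanSpace 𝕜 ι) :
    ‖(WithLp.toLp 2 (fun i => c i * x i) : EuclideanSpace 𝕜 ι)‖ ≤ ‖x‖ := by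
  rw [norm_eq, norm_eq]
  gcongr with i
  simpa using mul_le_of_le_one_left (norm_nonneg (x i)) (hc i)

theorem inner_eq_zero_of_disjoint_support {x y : EuclideanSpace 𝕜 ι}
    (h : Disjoint (Function.support x) (Function.support y)) : ⟪x, y⟫_𝕜 = 0 := by
  refine sum_eq_zero fun i _ => ?_
  by_cases hx : x i = 0
  · simp [hx]
  · simp [Function.notMem_support.mp (h.notMem_of_mem_left hx)]

end EuclideanSpace

theorem norm_sum_sq_le_of_inner_eq_zero {ι E : Type*} [Fintype ι] [DecidableEq ι]
    [NormedAddCommGroup E] [InnerProductSpace ℝ E] {u : ι → E} {M : ℝ} (hu : ∀ i, ‖u i‖ ≤ M)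
    (R : ι → ι → Prop) [DecidableRel R] (horth : ∀ i j, i ≠ j → ¬ R i j → ⟪u i, u j⟫ = 0) :
    ‖∑ i, u i‖ ^ 2 ≤ M ^ 2 * (Fintype.card ι + #{p ∈ univ.offDiag | R p.1 p.2}) := by
  have hinner_le : ∀ i j, ⟪u i, u j⟫ ≤ M ^ 2 := fun i j => calc
    ⟪u i, u j⟫ ≤ ‖u i‖ * ‖u j‖ := real_inner_le_norm _ _
    _ ≤ M * M := mul_le_mul (hu i) (hu j) (norm_nonneg _) ((norm_nonneg _).trans (hu i))
    _ = M ^ 2 := (sq M).symm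
  have hexpand : ‖∑ i, u i‖ ^ 2
      = ∑ p ∈ univ.diag, ⟪u p.1, u p.2⟫ + ∑ p ∈ univ.offDiag, ⟪u p.1, u p.2⟫ := by
    rw [← sum_union (disjoint_diag_offDiag _), diag_union_offDiag, sum_product,
      ← real_inner_self_eq_norm_sq, sum_inner]
    simp_rw [inner_sum]
  have hdiag : ∑ p ∈ univ.diag, ⟪u p.1, u p.2⟫ ≤ Fintype.card ι * M ^ 2 := by
    rw [sum_diag]
    simpa using sum_le_sum fun i (_ : i ∈ univ) => hinner_le i i
  have hoffDiag : ∑ p ∈ univ.offDiag, ⟪u p.1, u p.2⟫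
      ≤ ∑ p ∈ univ.offDiag, if R p.1 p.2 then M ^ 2 else 0 := by
    refine sum_le_sum fun p hp => ?_
    split_ifs with hR
    · exact hinner_le _ _
    · exact (horth _ _ (mem_offDiag.mp hp).2.2 hR).le
  rw [hexpand, natCast_card_filter, mul_add, mul_sum]
  simp only [mul_ite, mul_one, mul_zero]
  linarith

theorem integral_le_of_le_card_filter {Ω κ : Type*} [MeasurableSpace Ω] {μ : Measure Ω}
    [IsProbabilityMeasure μ] {f : Ω → ℝ} {J : Finset κ} {P : κ → Ω → Prop}
    [∀ j ω, Decidable (P j ω)] {a b p : ℝ}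
    (hf0 : ∀ ω, 0 ≤ f ω) (hf : ∀ ω, f ω ≤ a + b * #{j ∈ J | P j ω}) (hb : 0 ≤ b)
    (hP : ∀ j ∈ J, μ.real {ω | P j ω} ≤ p) :
    ∫ ω, f ω ∂μ ≤ a + b * (#J * p) := by
  -- the events `{ω | P j ω}` need not be measurable; their measurable hulls have the same measure
  set B := fun j => toMeasurable μ {ω | P j ω}
  have hB : ∀ j, MeasurableSet (B j) := fun j => measurableSet_toMeasurable _ _
  have hBint : ∀ j, Integrable ((B j).indicator (1 : Ω → ℝ)) μ := fun j =>
    (integrable_indicator_iff (hB j)).mpr (integrableOn_const (measure_ne_top μ _))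
  have hfg : ∀ ω, f ω ≤ a + b * ∑ j ∈ J, (B j).indicator 1 ω := fun ω => by
    refine (hf ω).trans (add_le_add_right (mul_le_mul_of_nonneg_left ?_ hb) a)
    rw [natCast_card_filter]
    refine sum_le_sum fun j _ => ?_
    split_ifs with h
    · exact (Set.indicator_of_mem (s := B j) (subset_toMeasurable μ _ h) (1 : Ω → ℝ)).ge
    · exact Set.indicator_nonneg (fun _ _ => zero_le_one) _
  have hg_int : Integrable (fun ω => b * ∑ j ∈ J, (B j).indicator 1 ω) μ :=
    (integrable_finsetSum _ fun j _ => hBint j).const_mul b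
  calc ∫ ω, f ω ∂μ ≤ ∫ ω, a + b * ∑ j ∈ J, (B j).indicator 1 ω ∂μ :=
        integral_mono_of_nonneg (.of_forall hf0) ((integrable_const a).add hg_int)
          (.of_forall hfg)
    _ = a + b * ∑ j ∈ J, μ.real {ω | P j ω} := by
        rw [integral_add (integrable_const a) hg_int, integral_const_mul,
          integral_finsetSum _ fun j _ => hBint j]
        simp [B, integral_indicator_one (hB _), measureReal_def, measure_toMeasurable]
    _ ≤ a + b * (#J * p) := by
        gcongr
        simpa using sum_le_sum hP

theorem norm_sum_sq_le_of_support_subset {ι κ : Type*} [Fintype ι] [DecidableEq ι] [Fintype κ]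
    [DecidableEq κ] {M : ℝ} {G : κ → EuclideanSpace ℝ ι} {c : κ → ι → ℝ} {s : κ → Finset ι}
    (hc : ∀ i v, ‖c i v‖ ≤ 1) (hG : ∀ i, ‖G i‖ ≤ M)
    (hsupp : ∀ i, Function.support (G i) ⊆ s i) :
    ‖∑ i, (WithLp.toLp 2 (fun v => c i v * G i v) : EuclideanSpace ℝ ι)‖ ^ 2
      ≤ M ^ 2 * (Fintype.card κ + #{p ∈ univ.offDiag | (s p.1 ∩ s p.2).Nonempty}) := by
  have hsupp_mul : ∀ i, Function.support (fun v => c i v * G i v) ⊆ s i := fun i =>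
    (Function.support_mul_subset_right _ _).trans (hsupp i)
  refine norm_sum_sq_le_of_inner_eq_zero
    (fun i => (EuclideanSpace.norm_toLp_mul_le (hc i) (G i)).trans (hG i))
    (fun i j => (s i ∩ s j).Nonempty) fun i j _ hij => ?_
  refine EuclideanSpace.inner_eq_zero_of_disjoint_support <|
    Set.disjoint_of_subset (hsupp_mul i) (hsupp_mul j) ?_
  rwa [Finset.disjoint_coe, Finset.disjoint_iff_inter_eq_empty, ← Finset.not_nonempty_iff_eq_empty]

theorem hogwild_mismatch_bound_general
    (d n k τ : ℕ) (hk : k ≤ 2 * τ)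
    (γ M ΔC : ℝ) (hΔC : 0 ≤ ΔC)
    {Ω : Type*} [MeasurableSpace Ω] (μ : Measure Ω) [IsProbabilityMeasure μ]
    (G : Fin k → Ω → EuclideanSpace ℝ (Fin d))
    (s : Fin k → Ω → Finset (Fin d))
    (σ : Fin k → Ω → Fin d → ℝ)
    (hσ : ∀ i ω j, σ i ω j ∈ ({-1, 0, 1} : Set ℝ))
    (hsupp : ∀ i ω, Function.support (G i ω) ⊆ (s i ω : Set (Fin d)))
    (hGbound : ∀ i ω, ‖G i ω‖ ≤ M)
    (hintersect : ∀ i j : Fin k, i ≠ j →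
      (μ {ω | (s i ω ∩ s j ω).Nonempty}).toReal ≤ 2 * ΔC / n)
    (D : Ω → EuclideanSpace ℝ (Fin d))
    (hD : ∀ ω, D ω = γ • ∑ i, (WithLp.toLp 2 (fun v => σ i ω v * G i ω v) : EuclideanSpace ℝ (Fin d))) :
    ∫ ω, ‖D ω‖ ^ 2 ∂μ ≤ γ ^ 2 * M ^ 2 * (2 * τ + 8 * τ ^ 2 * ΔC / n) := by
  have hσ_norm : ∀ i ω v, ‖σ i ω v‖ ≤ 1 := fun i ω v => by
    obtain h | h | h : σ i ω v = -1 ∨ σ i ω v = 0 ∨ σ i ω v = 1 := hσ i ω v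
    all_goals norm_num [h]
  have hpointwise : ∀ ω, ‖D ω‖ ^ 2 ≤ γ ^ 2 * M ^ 2 * k
      + γ ^ 2 * M ^ 2 * #{p ∈ univ.offDiag | (s p.1 ω ∩ s p.2 ω).Nonempty} := fun ω => by
    have hsum := norm_sum_sq_le_of_support_subset (hσ_norm · ω) (hGbound · ω) (hsupp · ω)
    rw [Fintype.card_fin] at hsum
    rw [hD ω, norm_smul, mul_pow, Real.norm_eq_abs, sq_abs]
    calc γ ^ 2 * ‖_‖ ^ 2 ≤ γ ^ 2 * (M ^ 2 * (k + _)) := by gcongr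
      _ = _ := by ring
  have hp_nonneg : 0 ≤ 2 * ΔC / n := by positivity
  have hoffDiag : (#(univ : Finset (Fin k)).offDiag : ℝ) ≤ 4 * τ ^ 2 := by
    have : #(univ : Finset (Fin k)).offDiag ≤ (2 * τ) ^ 2 := by
      rw [offDiag_card, card_univ, Fintype.card_fin]
      exact (Nat.sub_le _ _).trans (by nlinarith)
    exact_mod_cast this.trans_eq (by ring)
  calc ∫ ω, ‖D ω‖ ^ 2 ∂μ
      ≤ γ ^ 2 * M ^ 2 * k + γ ^ 2 * M ^ 2 * (#(univ : Finset (Fin k)).offDiag * (2 * ΔC / n)) :=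
        integral_le_of_le_card_filter (fun ω => sq_nonneg _) hpointwise (by positivity)
          fun p hp => hintersect p.1 p.2 (mem_offDiag.mp hp).2.2
    _ ≤ γ ^ 2 * M ^ 2 * (2 * τ) + γ ^ 2 * M ^ 2 * (4 * τ ^ 2 * (2 * ΔC / n)) := by
        gcongr
        exact_mod_cast hk
    _ = γ ^ 2 * M ^ 2 * (2 * τ + 8 * τ ^ 2 * ΔC / n) := by ring

theorem hogwild_mismatch_bound
    (d n k τ : ℕ) (hk : k ≤ 2 * τ)
    (γ M ΔC : ℝ) (hγ : 0 < γ) (hM : 0 ≤ M) (hΔC : 0 ≤ ΔC) (hn : 0 < n)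
    {Ω : Type*} [MeasurableSpace Ω] (μ : Measure Ω) [IsProbabilityMeasure μ]
    (G : Fin k → Ω → EuclideanSpace ℝ (Fin d))
    (s : Fin k → Ω → Finset (Fin d))
    (σ : Fin k → Ω → Fin d → ℝ)
    (hσ : ∀ i ω j, σ i ω j ∈ ({-1, 0, 1} : Set ℝ))
    (hsupp : ∀ i ω, Function.support (G i ω) ⊆ (s i ω : Set (Fin d)))
    (hGbound : ∀ i ω, ‖G i ω‖ ≤ M)
    (hintersect : ∀ i j : Fin k, i ≠ j →
      (μ {ω | (s i ω ∩ s j ω).Nonempty}).toReal ≤ 2 * ΔC / n)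
    (D : Ω → EuclideanSpace ℝ (Fin d))
    (hD : ∀ ω, D ω = γ • ∑ i, (WithLp.toLp 2 (fun v => σ i ω v * G i ω v) : EuclideanSpace ℝ (Fin d))) :
    ∫ ω, ‖D ω‖ ^ 2 ∂μ ≤ γ ^ 2 * M ^ 2 * (2 * τ + 8 * τ ^ 2 * ΔC / n) :=
  hogwild_mismatch_bound_general d n k τ hk γ M ΔC hΔC μ G s σ hσ hsupp hGbound hintersect D hD
end

section
/- Under the Hogwild! noise model, the projection error satisfies E⟨x̂_j - x_j, g(x̂_j, s_j)⟩ ≤ 4γM²τ·Δ̄_C/n. -/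
open Finset MeasureTheory RealInnerProductSpace

theorem hogwild_projection_error_bound
    (d n k τ : ℕ) (hk : k ≤ 2 * τ)
    (γ M ΔC : ℝ) (hγ : 0 < γ) (hM : 0 ≤ M) (hΔC : 0 ≤ ΔC) (hn : 0 < n)
    {Ω : Type*} [MeasurableSpace Ω] (μ : Measure Ω) [IsProbabilityMeasure μ]
    (G : Fin k → Ω → EuclideanSpace ℝ (Fin d))
    (s : Fin k → Ω → Finset (Fin d))
    (σ : Fin k → Ω → Fin d → ℝ)
    (hσ : ∀ i ω j, σ i ω j ∈ ({-1, 0, 1} : Set ℝ))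
    (hGbound : ∀ i ω, ‖G i ω‖ ≤ M)
    (W : Fin k → Ω → EuclideanSpace ℝ (Fin d))
    (hW : ∀ i ω, W i ω = fun v => σ i ω v * G i ω v)
    (Gj : Ω → EuclideanSpace ℝ (Fin d))
    (sj : Ω → Finset (Fin d))
    (hGjbound : ∀ ω, ‖Gj ω‖ ≤ M)
    (horth : ∀ i ω, (s i ω ∩ sj ω) = ∅ → ⟪W i ω, Gj ω⟫ = 0)
    (hintersect : ∀ i : Fin k,
      (μ {ω | (s i ω ∩ sj ω).Nonempty}).toReal ≤ 2 * ΔC / n)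
    (D : Ω → EuclideanSpace ℝ (Fin d))
    (hD : ∀ ω, D ω = γ • ∑ i, W i ω) :
    ∫ ω, ⟪D ω, Gj ω⟫ ∂μ ≤ 4 * γ * M ^ 2 * τ * ΔC / n := by
  set c : ℝ := γ * M ^ 2 with hc
  have hc0 : 0 ≤ c := by positivity
  have hWbound : ∀ i ω, ‖W i ω‖ ≤ M := by
    intro i ω
    have h1 : ‖W i ω‖ ≤ ‖G i ω‖ := by
      rw [EuclideanSpace.norm_eq, EuclideanSpace.norm_eq]
      apply Real.sqrt_le_sqrt
      apply Finset.sum_le_sum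
      intro v _
      rw [hW]
      have hs := hσ i ω v
      have habs : |σ i ω v| ≤ 1 := by
        simp only [Set.mem_insert_iff, Set.mem_singleton_iff] at hs
        rcases hs with h | h | h <;> simp [h]
      simp only [Real.norm_eq_abs, abs_mul]
      have hle : |σ i ω v| * |G i ω v| ≤ |G i ω v| := by
        nlinarith [abs_nonneg (G i ω v)]
      exact pow_le_pow_left₀ (by positivity) hle 2
    exact h1.trans (hGbound i ω)
  set A : Fin k → Set Ω := fun i => {ω | (s i ω ∩ sj ω).Nonempty} with hA
  -- pointwise bound on each inner product term
  have hterm : ∀ i ω, γ * ‖⟪W i ω, Gj ω⟫‖ ≤ (A i).indicator (fun _ => c) ω := by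
    intro i ω
    by_cases hmem : ω ∈ A i
    · rw [Set.indicator_of_mem hmem]
      have := abs_real_inner_le_norm (W i ω) (Gj ω)
      have h2 : ‖⟪W i ω, Gj ω⟫‖ ≤ M ^ 2 := by
        rw [Real.norm_eq_abs]
        calc |⟪W i ω, Gj ω⟫| ≤ ‖W i ω‖ * ‖Gj ω‖ := abs_real_inner_le_norm _ _
          _ ≤ M * M := mul_le_mul (hWbound i ω) (hGjbound ω) (norm_nonneg _)
              ((norm_nonneg (W i ω)).trans (hWbound i ω))
          _ = M ^ 2 := (sq M).symm
      calc γ * ‖⟪W i ω, Gj ω⟫‖ ≤ γ * M ^ 2 := by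
            exact mul_le_mul_of_nonneg_left h2 hγ.le
        _ = c := rfl
    · rw [Set.indicator_of_notMem hmem]
      have hempty : s i ω ∩ sj ω = ∅ := by
        by_contra h
        exact hmem (Finset.nonempty_of_ne_empty h)
      rw [horth i ω hempty]
      simp
  have hpt : ∀ ω, ‖⟪D ω, Gj ω⟫‖ ≤ ∑ i, (A i).indicator (fun _ => c) ω := by
    intro ω
    rw [hD ω, real_inner_smul_left, sum_inner]
    calc ‖γ * ∑ i, ⟪W i ω, Gj ω⟫‖ = γ * ‖∑ i, ⟪W i ω, Gj ω⟫‖ := by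
          rw [norm_mul, Real.norm_eq_abs γ, abs_of_pos hγ]
      _ ≤ γ * ∑ i, ‖⟪W i ω, Gj ω⟫‖ :=
          mul_le_mul_of_nonneg_left (norm_sum_le _ _) hγ.le
      _ = ∑ i, γ * ‖⟪W i ω, Gj ω⟫‖ := Finset.mul_sum _ _ _
      _ ≤ ∑ i, (A i).indicator (fun _ => c) ω := Finset.sum_le_sum fun i _ => hterm i ω
  -- lintegral bound
  have hμA : ∀ i, μ (A i) ≤ ENNReal.ofReal (2 * ΔC / n) := by
    intro i
    have hfin : μ (A i) ≠ ⊤ := (measure_lt_top μ _).ne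
    rw [← ENNReal.ofReal_toReal hfin]
    exact ENNReal.ofReal_le_ofReal (hintersect i)
  set B : Fin k → Set Ω := fun i => MeasureTheory.toMeasurable μ (A i) with hB
  have hAB : ∀ i, A i ⊆ B i := fun i => MeasureTheory.subset_toMeasurable μ (A i)
  have hBmeas : ∀ i, MeasurableSet (B i) := fun i => MeasureTheory.measurableSet_toMeasurable μ (A i)
  have hμB : ∀ i, μ (B i) = μ (A i) := fun i => MeasureTheory.measure_toMeasurable (A i)
  have hlin : ∫⁻ ω, ENNReal.ofReal ‖⟪D ω, Gj ω⟫‖ ∂μ ≤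
      ENNReal.ofReal (4 * γ * M ^ 2 * τ * ΔC / n) := by
    calc ∫⁻ ω, ENNReal.ofReal ‖⟪D ω, Gj ω⟫‖ ∂μ
        ≤ ∫⁻ ω, ∑ i, (B i).indicator (fun _ => ENNReal.ofReal c) ω ∂μ := by
          apply lintegral_mono
          intro ω
          calc ENNReal.ofReal ‖⟪D ω, Gj ω⟫‖
              ≤ ENNReal.ofReal (∑ i, (A i).indicator (fun _ => c) ω) :=
                ENNReal.ofReal_le_ofReal (hpt ω)
            _ = ∑ i, ENNReal.ofReal ((A i).indicator (fun _ => c) ω) :=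
                ENNReal.ofReal_sum_of_nonneg
                  (fun i _ => Set.indicator_nonneg (fun _ _ => hc0) ω)
            _ ≤ ∑ i, (B i).indicator (fun _ => ENNReal.ofReal c) ω := by
                apply Finset.sum_le_sum
                intro i _
                by_cases hmem : ω ∈ A i
                · rw [Set.indicator_of_mem hmem, Set.indicator_of_mem (hAB i hmem)]
                · rw [Set.indicator_of_notMem hmem]
                  simp
      _ = ∑ i, ∫⁻ ω, (B i).indicator (fun _ => ENNReal.ofReal c) ω ∂μ :=
          lintegral_finset_sum _ fun i _ => measurable_const.indicator (hBmeas i)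
      _ ≤ ∑ i : Fin k, ENNReal.ofReal c * ENNReal.ofReal (2 * ΔC / n) := by
          apply Finset.sum_le_sum
          intro i _
          calc ∫⁻ ω, (B i).indicator (fun _ => ENNReal.ofReal c) ω ∂μ
              ≤ ENNReal.ofReal c * μ (B i) := lintegral_indicator_const_le _ _
            _ = ENNReal.ofReal c * μ (A i) := by rw [hμB]
            _ ≤ ENNReal.ofReal c * ENNReal.ofReal (2 * ΔC / n) :=
              mul_le_mul_right (hμA i) _
      _ = ENNReal.ofReal ((k : ℝ) * (c * (2 * ΔC / n))) := by
          rw [Finset.sum_const, Finset.card_univ, Fintype.card_fin,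
            ← ENNReal.ofReal_mul hc0, nsmul_eq_mul,
            ← ENNReal.ofReal_natCast k,
            ← ENNReal.ofReal_mul (by positivity)]
      _ ≤ ENNReal.ofReal (4 * γ * M ^ 2 * τ * ΔC / n) := by
          apply ENNReal.ofReal_le_ofReal
          have hk' : (k : ℝ) ≤ 2 * τ := by exact_mod_cast hk
          have h1 : (k : ℝ) * (c * (2 * ΔC / n)) ≤ (2 * τ) * (c * (2 * ΔC / n)) :=
            mul_le_mul_of_nonneg_right hk' (by positivity)
          have h2 : (2 * (τ:ℝ)) * (c * (2 * ΔC / n)) = 4 * γ * M ^ 2 * τ * ΔC / n := by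
            rw [hc]; field_simp; ring
          linarith
  have hbnd : (0:ℝ) ≤ 4 * γ * M ^ 2 * τ * ΔC / n := by positivity
  calc ∫ ω, ⟪D ω, Gj ω⟫ ∂μ ≤ ‖∫ ω, ⟪D ω, Gj ω⟫ ∂μ‖ := le_abs_self _
    _ ≤ (∫⁻ ω, ENNReal.ofReal ‖⟪D ω, Gj ω⟫‖ ∂μ).toReal := norm_integral_le_lintegral_norm _
    _ ≤ (ENNReal.ofReal (4 * γ * M ^ 2 * τ * ΔC / n)).toReal := by
        apply ENNReal.toReal_mono ENNReal.ofReal_ne_top hlin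
    _ = 4 * γ * M ^ 2 * τ * ΔC / n := ENNReal.toReal_ofReal hbnd
end

section
/- Coupled recursion bound for ASCD: suppose nonnegative sequences (G_r) and (Δ_r) satisfy G_r ≤ A + B·Δ_r and Δ_r ≤ 9(r+1)²·C·G_{r+1} for all r, where B·C ≤ 1/(18ℓ²) for some ℓ ≥ 1, and G_ℓ ≤ dM². Then G_0 ≤ 2A + (BC)^ℓ·(3^ℓ ℓ!)²·dM², and in particular G_0 ≤ 2A + 2^{-ℓ}·dM². -/
theorem ascd_coupled_recursion_bound
    (G Δ : ℕ → ℝ) (hG0 : ∀ r, 0 ≤ G r) (hΔ0 : ∀ r, 0 ≤ Δ r)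
    (A B C M : ℝ) (hA : 0 ≤ A) (hB : 0 ≤ B) (hC : 0 ≤ C) (hM : 0 ≤ M)
    (d ℓ : ℕ) (hℓ : 1 ≤ ℓ)
    (hGrec : ∀ r, G r ≤ A + B * Δ r)
    (hΔrec : ∀ r, Δ r ≤ 9 * (r + 1) ^ 2 * C * G (r + 1))
    (hBC : B * C ≤ 1 / (18 * ℓ ^ 2))
    (hGℓ : G ℓ ≤ d * M ^ 2) :
    G 0 ≤ 2 * A + (B * C) ^ ℓ * ((3 ^ ℓ * Nat.factorial ℓ : ℕ) : ℝ) ^ 2 * (d * M ^ 2)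
      ∧ G 0 ≤ 2 * A + (1 / 2) ^ ℓ * (d * M ^ 2) := by
  set p : ℕ → ℝ := fun k => ((3 ^ k * Nat.factorial k : ℕ) : ℝ) ^ 2 * (B * C) ^ k with hp
  have hBC0 : 0 ≤ B * C := mul_nonneg hB hC
  have hp0 : ∀ k, 0 ≤ p k := fun k => mul_nonneg (sq_nonneg _) (pow_nonneg hBC0 k)
  have hpsucc : ∀ k : ℕ, p (k + 1) = p k * (9 * ((k : ℝ) + 1) ^ 2 * (B * C)) := by
    intro k
    simp only [hp]
    push_cast [Nat.factorial_succ, pow_succ]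
    ring
  have key : ∀ k, G 0 ≤ A * ∑ i ∈ Finset.range k, p i + p k * G k := by
    intro k
    induction k with
    | zero => simp [hp]
    | succ k ih =>
      have h1 : G k ≤ A + 9 * ((k : ℝ) + 1) ^ 2 * (B * C) * G (k + 1) := by
        have hd := hΔrec k
        have hGr := hGrec k
        have hmul : B * Δ k ≤ B * (9 * ((k : ℝ) + 1) ^ 2 * C * G (k + 1)) :=
          mul_le_mul_of_nonneg_left hd hB
        nlinarith [hmul, hGr]
      have h2 : p k * G k ≤ p k * A + p (k + 1) * G (k + 1) := by
        rw [hpsucc k]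
        calc p k * G k ≤ p k * (A + 9 * ((k : ℝ) + 1) ^ 2 * (B * C) * G (k + 1)) :=
              mul_le_mul_of_nonneg_left h1 (hp0 k)
          _ = p k * A + p k * (9 * ((k : ℝ) + 1) ^ 2 * (B * C)) * G (k + 1) := by ring
      calc G 0 ≤ A * ∑ i ∈ Finset.range k, p i + p k * G k := ih
        _ ≤ A * ∑ i ∈ Finset.range k, p i + (p k * A + p (k + 1) * G (k + 1)) := by linarith
        _ = A * ∑ i ∈ Finset.range (k + 1), p i + p (k + 1) * G (k + 1) := by
            rw [Finset.sum_range_succ]; ring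
  have hℓpos : (0:ℝ) < (ℓ:ℝ) ^ 2 := by
    have : (1:ℝ) ≤ (ℓ:ℝ) := by exact_mod_cast hℓ
    nlinarith
  have hhalf : ∀ i ≤ ℓ, p i ≤ (1/2 : ℝ) ^ i := by
    intro i hi
    have hfn : (3 ^ i * Nat.factorial i : ℕ) ≤ 3 ^ i * i ^ i :=
      Nat.mul_le_mul_left _ (Nat.factorial_le_pow i)
    have hcast : ((3 ^ i * Nat.factorial i : ℕ) : ℝ) ≤ (3:ℝ) ^ i * (i:ℝ) ^ i := by
      exact_mod_cast hfn
    have hsq : ((3 ^ i * Nat.factorial i : ℕ) : ℝ) ^ 2 ≤ (9 * (i:ℝ) ^ 2) ^ i := by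
      have h1 : ((3 ^ i * Nat.factorial i : ℕ) : ℝ) ^ 2 ≤ ((3:ℝ) ^ i * (i:ℝ) ^ i) ^ 2 :=
        pow_le_pow_left₀ (by positivity) hcast 2
      have h2 : ((3:ℝ) ^ i * (i:ℝ) ^ i) ^ 2 = (9 * (i:ℝ) ^ 2) ^ i := by
        rw [mul_pow, mul_pow, ← pow_mul, ← pow_mul, ← pow_mul, mul_comm i 2, pow_mul]
        norm_num
      linarith [h1, h2.le, h2.ge]
    have hb : 9 * (i:ℝ) ^ 2 * (B * C) ≤ 1/2 := by
      have hil : (i:ℝ) ≤ (ℓ:ℝ) := by exact_mod_cast hi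
      have hi0 : (0:ℝ) ≤ (i:ℝ) := by positivity
      have h1 : 9 * (i:ℝ) ^ 2 * (B * C) ≤ 9 * (ℓ:ℝ) ^ 2 * (B * C) :=
        mul_le_mul_of_nonneg_right (by nlinarith) hBC0
      have h2 : 9 * (ℓ:ℝ) ^ 2 * (B * C) ≤ 9 * (ℓ:ℝ) ^ 2 * (1 / (18 * (ℓ:ℝ) ^ 2)) := by
        have : (0:ℝ) ≤ 9 * (ℓ:ℝ) ^ 2 := by positivity
        have hBC' : B * C ≤ 1 / (18 * (ℓ:ℝ) ^ 2) := by exact_mod_cast hBC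
        nlinarith
      have h3 : 9 * (ℓ:ℝ) ^ 2 * (1 / (18 * (ℓ:ℝ) ^ 2)) = 1/2 := by
        field_simp
        ring
      linarith
    calc p i ≤ (9 * (i:ℝ) ^ 2) ^ i * (B * C) ^ i :=
          mul_le_mul_of_nonneg_right hsq (pow_nonneg hBC0 i)
      _ = (9 * (i:ℝ) ^ 2 * (B * C)) ^ i := (mul_pow _ _ i).symm
      _ ≤ (1/2 : ℝ) ^ i := pow_le_pow_left₀ (by positivity) hb i
  have hsum : ∑ i ∈ Finset.range ℓ, p i ≤ 2 := by
    calc ∑ i ∈ Finset.range ℓ, p i ≤ ∑ i ∈ Finset.range ℓ, (1/2 : ℝ) ^ i :=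
          Finset.sum_le_sum fun i hi => hhalf i (le_of_lt (Finset.mem_range.mp hi))
      _ ≤ 2 := sum_geometric_two_le ℓ
  have hdM : (0:ℝ) ≤ (d:ℝ) * M ^ 2 := by positivity
  have hmain : G 0 ≤ 2 * A + p ℓ * ((d:ℝ) * M ^ 2) := by
    have hk := key ℓ
    have h1 : A * ∑ i ∈ Finset.range ℓ, p i ≤ 2 * A := by nlinarith [hsum, hA]
    have h2 : p ℓ * G ℓ ≤ p ℓ * ((d:ℝ) * M ^ 2) := mul_le_mul_of_nonneg_left hGℓ (hp0 ℓ)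
    linarith
  have hpℓ : p ℓ = (B * C) ^ ℓ * ((3 ^ ℓ * Nat.factorial ℓ : ℕ) : ℝ) ^ 2 := by
    simp only [hp]; ring
  constructor
  · calc G 0 ≤ 2 * A + p ℓ * ((d:ℝ) * M ^ 2) := hmain
      _ = 2 * A + (B * C) ^ ℓ * ((3 ^ ℓ * Nat.factorial ℓ : ℕ) : ℝ) ^ 2 * ((d:ℝ) * M ^ 2) := by
          rw [hpℓ]
  · have h2 : p ℓ * ((d:ℝ) * M ^ 2) ≤ (1/2 : ℝ) ^ ℓ * ((d:ℝ) * M ^ 2) :=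
      mul_le_mul_of_nonneg_right (hhalf ℓ le_rfl) hdM
    linarith
end

section
/- If a nonnegative sequence satisfies a_{j+1} ≤ (1 - 1/(4κ²)) a_j + 2γ²L² a_0 for all j, where γ = 1/(4Lκ) and κ ≥ 1, then for j+1 = 8κ², a_{j+1} ≤ 0.75·a_0. -/
theorem svrg_epoch_contraction
    (a : ℕ → ℝ) (ha : ∀ j, 0 ≤ a j)
    (κ L γ : ℝ) (hκ : 1 ≤ κ) (hL : 0 < L)
    (hγ : γ = 1 / (4 * L * κ))
    (hrec : ∀ i, a (i + 1) ≤ (1 - 1 / (4 * κ ^ 2)) * a i + 2 * γ ^ 2 * L ^ 2 * a 0)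
    (j : ℕ) (hj : (j : ℝ) + 1 = 8 * κ ^ 2) :
    a (j + 1) ≤ 0.75 * a 0 := by
  have hκ0 : (0:ℝ) < κ := lt_of_lt_of_le one_pos hκ
  set x : ℝ := 1 / (4 * κ ^ 2) with hx
  have hx0 : 0 < x := by positivity
  have hx1 : x ≤ 1/4 := by
    rw [hx, div_le_div_iff₀ (by positivity) (by norm_num)]
    nlinarith
  have hρ0 : 0 ≤ 1 - x := by linarith
  have hc : 2 * γ ^ 2 * L ^ 2 = x / 2 := by
    rw [hγ, hx]; field_simp; ring
  have key : ∀ n, a n ≤ (1 - x) ^ n * a 0 + 1/2 * (1 - (1 - x) ^ n) * a 0 := by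
    intro n
    induction n with
    | zero => simp
    | succ n ih =>
      have h1 := hrec n
      rw [hc] at h1
      have h2 := mul_le_mul_of_nonneg_left ih hρ0
      rw [pow_succ]
      nlinarith [h1, h2]
  have hb := key (j + 1)
  have hexp : 1 - x ≤ Real.exp (-x) := by
    have := Real.add_one_le_exp (-x); linarith
  have hpow : (1 - x) ^ (j + 1) ≤ Real.exp (-x) ^ (j + 1) :=
    pow_le_pow_left₀ hρ0 hexp _
  have hem : Real.exp (-x) ^ (j + 1) = Real.exp (((j:ℝ) + 1) * (-x)) := by
    rw [← Real.exp_nat_mul]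
    norm_num
  have h2x : ((j:ℝ) + 1) * x = 2 := by
    rw [hj, hx]; field_simp; ring
  have hexp2 : Real.exp (((j:ℝ) + 1) * (-x)) = Real.exp (-2) := by
    congr 1; nlinarith [h2x]
  have he2 : Real.exp (-2) ≤ 1/4 := by
    rw [Real.exp_neg]
    have h1 : (2.7182818283 : ℝ) < Real.exp 1 := Real.exp_one_gt_d9
    have he : Real.exp 2 = Real.exp 1 * Real.exp 1 := by
      rw [← Real.exp_add]; norm_num
    have h4 : (4:ℝ) ≤ Real.exp 2 := by nlinarith
    calc (Real.exp 2)⁻¹ ≤ (4:ℝ)⁻¹ := inv_anti₀ (by norm_num) h4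
      _ = 1/4 := by norm_num
  have hfinal : (1 - x) ^ (j + 1) ≤ 1/4 := by
    calc (1 - x) ^ (j + 1) ≤ Real.exp (-x) ^ (j + 1) := hpow
    _ = Real.exp (-2) := by rw [hem, hexp2]
    _ ≤ 1/4 := he2
  have hp0 : 0 ≤ (1 - x) ^ (j + 1) := pow_nonneg hρ0 _
  nlinarith [ha 0, hb, hfinal, hp0]
end
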